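/- For rule 218 with central cell 0, distinct words in the same set S_{2k+1} index different rows: for every n and every k ≥ 1 with 2k+1 ≤ n, if x, x̃ ∈ S_{2k+1} and x ≠ x̃, then there exists y ∈ {0,1}^n such that f^n(x·0·y) ≠ f^n(x̃·0·y). -/

import Mathlib

/-- The local rule of elementary cellular automaton 218. -/
def rule218 : Bool → Bool → Bool → Bool
  | true,  true,  true  => true
  | true,  true,  false => true
  | true,  false, true  => false
  | true,  false, false => true
  | false, true,  true  => true
  | false, true,  false => false
  | false, false, true  => true
  | false, false, false => false

/-- One synchronous step of rule 218 on a finite word (sliding window of width 3). -/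
def step218 : List Bool → List Bool
  | a :: b :: c :: l => rule218 a b c :: step218 (b :: c :: l)
  | _ => []

/-- The `n`-th iterated local rule of rule 218. -/
def iter218 (n : ℕ) (z : List Bool) : Bool := (step218^[n] z).headD false

/-- The set `S_{2k+1} = {1^{n-2k-1} 0^{2k+1}} ∪
`{1^{n-2k-1} 0^a 1 0^b : a, b odd, b ≥ 3, a + b = 2k}` of words of length `n`
(written `x_n … x_1` left to right). -/
def S218 (n k : ℕ) : Set (List Bool) :=
  {List.replicate (n - (2 * k + 1)) true ++ List.replicate (2 * k + 1) false} ∪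
  { w | ∃ a b : ℕ, a % 2 = 1 ∧ b % 2 = 1 ∧ 3 ≤ b ∧ a + b = 2 * k ∧
      w = List.replicate (n - (2 * k + 1)) true ++ List.replicate a false ++ [true] ++
        List.replicate b false }

/-!
Rule 218 replaces a `0` by the XOR of its neighbours and a `1` by their OR. Hence the blocks
`111` and `11011` reproduce themselves whatever their neighbours are, and once such a block is
centred on the central cell it fixes the value of `fⁿ`.

Two distinct words of `S_{2k+1}` can be ordered so that the first ends in `1 0^b` (`b` odd,
`b ≥ 3`) and the second in `0^{b+2}`; write `b = 2d + 3`. Probe both with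
`y = 0^{b-3} 1011 0^{n-b-1}`. In the first row the `1` of `x` and the block `1011` of `y` enclose
`2b - 2` zeros; the signals they emit meet after `b - 1` steps and leave `11011` centred at the
central cell, so `fⁿ = 0`. In the second row the signal from `1011` runs through `2b` zeros and
leaves `111` centred at the central cell, so `fⁿ = 1`.
-/

open List

lemma step218_length : ∀ w : List Bool, (step218 w).length = w.length - 2
  | [] | [_] | [_, _] => rfl
  | a :: b :: c :: l => by simp [step218, step218_length (b :: c :: l)]

lemma exists_step218_cons {w : List Bool} (hw : 2 ≤ w.length) (a : Bool) :
    ∃ c, step218 (a :: w) = c :: step218 w := by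
  match w, hw with
  | _ :: _ :: _, _ => exact ⟨_, rfl⟩

lemma exists_step218_append_left (u : List Bool) {w : List Bool} (hw : 2 ≤ w.length) :
    ∃ u', u'.length = u.length ∧ step218 (u ++ w) = u' ++ step218 w := by
  induction u with
  | nil => exact ⟨[], rfl, rfl⟩
  | cons a u ih =>
    obtain ⟨u', hlen, hu'⟩ := ih
    obtain ⟨c, hc⟩ := exists_step218_cons (w := u ++ w) (by simp; omega) a
    exact ⟨c :: u', by simp [hlen], by rw [cons_append, hc, hu', cons_append]⟩

lemma exists_step218_append_right : ∀ {z : List Bool}, 2 ≤ z.length → ∀ v : List Bool,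
    ∃ v', v'.length = v.length ∧ step218 (z ++ v) = step218 z ++ v'
  | [a, b], _, v => ⟨step218 (a :: b :: v), by simp [step218_length], rfl⟩
  | a :: b :: c :: l, _, v => by
    obtain ⟨v', hlen, hv'⟩ := exists_step218_append_right (z := b :: c :: l) (by simp) v
    exact ⟨v', hlen, by simp only [cons_append, step218] at hv' ⊢; rw [hv']⟩

lemma exists_step218_append_append (u v : List Bool) {z : List Bool} (hz : 2 ≤ z.length) :
    ∃ u' v', u'.length = u.length ∧ v'.length = v.length ∧
      step218 (u ++ z ++ v) = u' ++ step218 z ++ v' := by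
  obtain ⟨v', hv, hzv⟩ := exists_step218_append_right hz v
  obtain ⟨u', hu, huzv⟩ := exists_step218_append_left u (w := z ++ v) (by simp; omega)
  exact ⟨u', v', hu, hv, by rw [append_assoc, huzv, hzv, append_assoc]⟩

lemma exists_step218_iterate_append_append (t : ℕ) (u v : List Bool) {z : List Bool}
    (hz : 2 * t ≤ z.length) :
    ∃ u' v', u'.length = u.length ∧ v'.length = v.length ∧
      step218^[t] (u ++ z ++ v) = u' ++ step218^[t] z ++ v' := by
  induction t generalizing u v z with
  | zero => exact ⟨u, v, rfl, rfl, rfl⟩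
  | succ t ih =>
    obtain ⟨u₁, v₁, hu₁, hv₁, h₁⟩ := exists_step218_append_append u v (z := z) (by omega)
    obtain ⟨u₂, v₂, hu₂, hv₂, h₂⟩ := ih u₁ v₁ (z := step218 z) (by rw [step218_length]; omega)
    exact ⟨u₂, v₂, hu₂.trans hu₁, hv₂.trans hv₁, by
      rw [Function.iterate_succ_apply, Function.iterate_succ_apply, h₁, h₂]⟩

lemma step218_iterate_of_stable {s : List Bool} (hs : ∀ a b, step218 (a :: s ++ [b]) = s) :
    ∀ (j : ℕ) (u v : List Bool), u.length = j → v.length = j → step218^[j] (u ++ s ++ v) = s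
  | 0, [], [], _, _ => by simp
  | j + 1, u, b :: v, hu, hv => by
    obtain rfl | ⟨u, a, rfl⟩ := u.eq_nil_or_concat
    · simp at hu
    obtain ⟨u', v', hu', hv', h⟩ := exists_step218_append_append u v (z := a :: s ++ [b]) (by simp)
    have hword : concat u a ++ s ++ b :: v = u ++ (a :: s ++ [b]) ++ v := by simp
    rw [Function.iterate_succ_apply, hword, h, hs]
    exact step218_iterate_of_stable hs j u' v' (by simp at hu; omega) (by simp at hv; omega)

lemma iter218_add (s t : ℕ) (w : List Bool) : iter218 (s + t) w = iter218 s (step218^[t] w) := by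
  rw [iter218, iter218, Function.iterate_add_apply]

lemma iter218_eq_of_iterate_stable {t j : ℕ} {z s u v : List Bool} (hz : 2 * t ≤ z.length)
    (hzs : step218^[t] z = s) (hs : ∀ a b, step218 (a :: s ++ [b]) = s)
    (hu : u.length = j) (hv : v.length = j) (r : ℕ) :
    iter218 (r + j + t) (u ++ z ++ v) = iter218 r s := by
  obtain ⟨u', v', hu', hv', h⟩ := exists_step218_iterate_append_append t u v hz
  rw [iter218_add, iter218_add, h, hzs,
    step218_iterate_of_stable hs j u' v' (hu'.trans hu) (hv'.trans hv)]

lemma step218_replicate_false_append (g : ℕ) (w : List Bool) :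
    step218 (replicate (g + 2) false ++ w) = replicate g false ++ step218 (false :: false :: w) := by
  induction g with
  | zero => rfl
  | succ g ih =>
    simp only [replicate_succ, cons_append] at ih ⊢
    rw [step218, ih]
    rfl

lemma step218_iterate_two_cycle {p P Q : List Bool}
    (hp : ∀ w, step218 (p ++ false :: false :: w) = p ++ step218 (false :: false :: w))
    (hPQ : step218 (false :: false :: P) = Q) (hQP : step218 (false :: false :: Q) = P)
    (g i : ℕ) :
    step218^[2 * i] (p ++ replicate (4 * i + g) false ++ P) = p ++ replicate g false ++ P := by
  have hstep (g : ℕ) (w : List Bool) : step218 (p ++ replicate (g + 2) false ++ w) =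
      p ++ replicate g false ++ step218 (false :: false :: w) := by
    rw [append_assoc, replicate_succ, replicate_succ, cons_append, cons_append, hp,
      ← cons_append, ← cons_append, ← replicate_succ, ← replicate_succ,
      step218_replicate_false_append, append_assoc]
  induction i with
  | zero => simp
  | succ i ih =>
    rw [show 2 * (i + 1) = 2 * i + 1 + 1 by ring, Function.iterate_succ_apply,
      Function.iterate_succ_apply, show 4 * (i + 1) + g = 4 * i + g + 2 + 2 by ring,
      hstep, hPQ, hstep, hQP, ih]

lemma step218_iterate_signals_collide (d : ℕ) :
    step218^[2 * d + 2] ([true] ++ replicate (4 * d + 4) false ++ [true, false, true, true]) =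
      [true, true, false, true, true] :=
  step218_iterate_two_cycle (p := [true]) (fun _ => rfl) rfl rfl 0 (d + 1)

lemma step218_iterate_signal_fills (d : ℕ) :
    step218^[2 * d + 4] (replicate (4 * d + 6) false ++ [true, false, true, true, false]) =
      [true, true, true] := by
  have hcycle := step218_iterate_two_cycle (p := []) (fun _ => rfl)
    (P := [true, false, false, true, true]) rfl rfl 0 (d + 1)
  rw [show 2 * d + 4 = 2 * (d + 1) + 1 + 1 by ring, Function.iterate_succ_apply',
    Function.iterate_succ_apply, step218_replicate_false_append,
    show step218 [false, false, true, false, true, true, false] =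
      [true, false, false, true, true] from rfl, show 4 * d + 4 = 4 * (d + 1) + 0 by ring]
  simp only [nil_append] at hcycle
  rw [hcycle]
  rfl

lemma replicate_append_cons_replicate_append {α : Type*} (a b : ℕ) (x : α) (l : List α) :
    replicate a x ++ x :: (replicate b x ++ l) = replicate (a + 1 + b) x ++ l := by
  rw [replicate_add, replicate_succ']
  simp

-- `y = 0^{b-3} 1011 0^{n-b-1}` with `b = 2d + 3`.
def probe218 (n d : ℕ) : List Bool :=
  replicate (2 * d) false ++ [true, false, true, true] ++ replicate (n - (2 * d + 4)) false

lemma probe218_length {n d : ℕ} (h : 2 * d + 4 ≤ n) : (probe218 n d).length = n := by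
  simp [probe218]
  omega

lemma iter218_probe218_of_true_replicate {n d : ℕ} (w : List Bool)
    (hn : w.length + (2 * d + 4) = n) :
    iter218 n ((w ++ [true] ++ replicate (2 * d + 3) false) ++ false :: probe218 n d) = false := by
  have hword : (w ++ [true] ++ replicate (2 * d + 3) false) ++ false :: probe218 n d =
      w ++ ([true] ++ replicate (4 * d + 4) false ++ [true, false, true, true]) ++
        replicate w.length false := by
    rw [probe218, ← hn, Nat.add_sub_cancel]
    simp only [append_assoc, cons_append, replicate_append_cons_replicate_append]
    ring_nf
  rw [hword, show n = 2 + w.length + (2 * d + 2) by omega,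
    iter218_eq_of_iterate_stable (by simp; omega) (step218_iterate_signals_collide d)
      (by decide) rfl length_replicate]
  rfl

lemma iter218_probe218_of_replicate {n d : ℕ} (w : List Bool)
    (hn : w.length + (2 * d + 5) = n) :
    iter218 n ((w ++ replicate (2 * d + 5) false) ++ false :: probe218 n d) = true := by
  have hword : (w ++ replicate (2 * d + 5) false) ++ false :: probe218 n d =
      w ++ (replicate (4 * d + 6) false ++ [true, false, true, true, false]) ++
        replicate w.length false := by
    rw [probe218, ← hn, show w.length + (2 * d + 5) - (2 * d + 4) = w.length + 1 by omega,
      replicate_succ (n := w.length)]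
    simp only [append_assoc, cons_append, nil_append, replicate_append_cons_replicate_append]
    ring_nf
  rw [hword, show n = 1 + w.length + (2 * d + 4) by omega,
    iter218_eq_of_iterate_stable (by simp; omega) (step218_iterate_signal_fills d)
      (by decide) rfl length_replicate]
  rfl

def Separated218 (d : ℕ) (x x' : List Bool) : Prop :=
  (∃ w, x = w ++ [true] ++ replicate (2 * d + 3) false) ∧
    ∃ w', x' = w' ++ replicate (2 * d + 5) false

lemma Separated218.exists_iter218_ne {n d : ℕ} {x x' : List Bool} (h : Separated218 d x x')
    (hx : x.length = n) (hx' : x'.length = n) :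
    ∃ y : List Bool, y.length = n ∧ iter218 n (x ++ false :: y) ≠ iter218 n (x' ++ false :: y) := by
  obtain ⟨⟨w, rfl⟩, ⟨w', rfl⟩⟩ := h
  simp only [length_append, length_replicate, length_singleton] at hx hx'
  refine ⟨probe218 n d, probe218_length (by omega), ?_⟩
  rw [iter218_probe218_of_true_replicate w (by omega), iter218_probe218_of_replicate w' hx']
  decide

lemma separated218_of_le {d r : ℕ} (w w' : List Bool) (hr : 2 * d + 5 ≤ r) :
    Separated218 d (w ++ [true] ++ replicate (2 * d + 3) false) (w' ++ replicate r false) :=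
  ⟨⟨w, rfl⟩, w' ++ replicate (r - (2 * d + 5)) false, by
    rw [append_assoc, replicate_append_replicate, Nat.sub_add_cancel hr]⟩

lemma length_of_mem_S218 {n k : ℕ} (hkn : 2 * k + 1 ≤ n) {x : List Bool} (hx : x ∈ S218 n k) :
    x.length = n := by
  rcases hx with rfl | ⟨a, b, -, -, -, hab, rfl⟩ <;> simp <;> omega

lemma exists_separated218_of_mem_S218 {n k : ℕ} {x x' : List Bool} (hx : x ∈ S218 n k)
    (hx' : x' ∈ S218 n k) (hne : x ≠ x') : ∃ d, Separated218 d x x' ∨ Separated218 d x' x := by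
  rcases hx with rfl | ⟨a, b, ha, hb, hb3, hab, rfl⟩ <;>
    rcases hx' with rfl | ⟨a', b', ha', hb', hb3', hab', rfl⟩
  · exact absurd rfl hne
  · obtain ⟨d, rfl⟩ : ∃ d, b' = 2 * d + 3 := ⟨(b' - 3) / 2, by omega⟩
    exact ⟨d, .inr (separated218_of_le _ _ (by omega))⟩
  · obtain ⟨d, rfl⟩ : ∃ d, b = 2 * d + 3 := ⟨(b - 3) / 2, by omega⟩
    exact ⟨d, .inl (separated218_of_le _ _ (by omega))⟩
  · rcases lt_trichotomy b b' with hlt | rfl | hgt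
    · obtain ⟨d, rfl⟩ : ∃ d, b = 2 * d + 3 := ⟨(b - 3) / 2, by omega⟩
      exact ⟨d, .inl (separated218_of_le _ _ (by omega))⟩
    · obtain rfl : a = a' := by omega
      exact absurd rfl hne
    · obtain ⟨d, rfl⟩ : ∃ d, b' = 2 * d + 3 := ⟨(b' - 3) / 2, by omega⟩
      exact ⟨d, .inr (separated218_of_le _ _ (by omega))⟩

theorem rule218_rows_distinct_within_level_general (n k : ℕ)
    (hkn : 2 * k + 1 ≤ n)
    (x xt : List Bool) (hx : x ∈ S218 n k) (hxt : xt ∈ S218 n k) (hne : x ≠ xt) :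
    ∃ y : List Bool, y.length = n ∧
      iter218 n (x ++ false :: y) ≠ iter218 n (xt ++ false :: y) := by
  have hlen := length_of_mem_S218 hkn hx
  have hlen' := length_of_mem_S218 hkn hxt
  obtain ⟨d, hsep | hsep⟩ := exists_separated218_of_mem_S218 hx hxt hne
  · exact hsep.exists_iter218_ne hlen hlen'
  · obtain ⟨y, hy, hne'⟩ := hsep.exists_iter218_ne hlen' hlen
    exact ⟨y, hy, hne'.symm⟩

/-- For rule 218 with central cell 0, distinct words in the same set `S_{2k+1}`
index different rows of the matrix `(x,y) ↦ fⁿ(x·0·y)`. -/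
theorem rule218_rows_distinct_within_level (n k : ℕ)
    (hk : 1 ≤ k) (hkn : 2 * k + 1 ≤ n)
    (x xt : List Bool) (hx : x ∈ S218 n k) (hxt : xt ∈ S218 n k) (hne : x ≠ xt) :
    ∃ y : List Bool, y.length = n ∧
      iter218 n (x ++ false :: y) ≠ iter218 n (xt ++ false :: y) :=
  rule218_rows_distinct_within_level_general n k hkn x xt hx hxt hne
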